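/- arXiv:2210.00082 — 2 statements merged into one kernel-verified Lean document; each statement's English description precedes it below -/
import Mathlib

section
/- Let ν_n(z) = (z^n/(b+1)_n)·∑_{x≥0} z^x/((b+n+1)_x x!) with b > −1. Then for m ≤ n, the quantity L[φ_n φ_m] = ∑_{k=0}^{m} C(n,k)C(m,k)k!·ν_{n+m-k}(z) satisfies L[φ_n φ_m] = C(n,m)·(m!/(b+1)_n)·z^n + O(z^{n+1}) as z → 0⁺; in particular lim_{z→0⁺} L[φ_n φ_m]/z^n = C(n,m)·m!/(b+1)_n. -/
open Filter Topology Asymptotics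

/-- The Pochhammer symbol `(c)_n = ∏_{j=0}^{n-1}(c+j)`. -/
noncomputable def poch (c : ℝ) (n : ℕ) : ℝ := ∏ j ∈ Finset.range n, (c + j)

/-- The moment `ν_n(z)` of the generalized Charlier functional on the falling
factorial basis. -/
noncomputable def nu (b : ℝ) (n : ℕ) (z : ℝ) : ℝ :=
  z ^ n / poch (b + 1) n * ∑' x : ℕ, z ^ x / (poch (b + n + 1) x * x.factorial)

/-! The series in `nu b j` is the entire function `₀F₁(; b+j+1; z)`: its coefficients
`1/((c)_x x!)` satisfy a ratio test, so it is `1 + O(z)` at `0` and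
`ν_j(z) = z^j/(b+1)_j + O(z^{j+1})`. In the sum, the terms with `k < m` are
`O(z^{n+m-k}) ⊆ O(z^{n+1})`, and the term `k = m` is `C(n,m) m! ν_n(z)`. -/

section NormedField

variable {𝕜 : Type*} [NormedField 𝕜]

theorem isBigO_pow_pow_nhds_zero {m n : ℕ} (h : m ≤ n) :
    (fun z : 𝕜 => z ^ n) =O[𝓝 0] fun z => z ^ m := by
  rcases h.eq_or_lt with rfl | hlt
  · exact isBigO_refl _ _
  · exact (isLittleO_pow_pow hlt).isBigO

theorem isBigO_tsum_mul_pow_sub_const [CompleteSpace 𝕜] {a : ℕ → 𝕜}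
    (ha : Summable fun x => ‖a x‖) :
    (fun z : 𝕜 => ∑' x, a x * z ^ x - a 0) =O[𝓝 0] fun z => z := by
  have ha' : Summable fun x => ‖a (x + 1)‖ := (summable_nat_add_iff 1).mpr ha
  refine IsBigO.of_bound (∑' x, ‖a (x + 1)‖) ?_
  filter_upwards [Metric.closedBall_mem_nhds (0 : 𝕜) zero_lt_one] with z hz
  rw [mem_closedBall_zero_iff] at hz
  have hterm : ∀ k x, ‖a k * z ^ x‖ ≤ ‖a k‖ := fun k x => by
    rw [norm_mul, norm_pow]
    exact mul_le_of_le_one_right (norm_nonneg _) (pow_le_one₀ (norm_nonneg _) hz)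
  have hsum : Summable fun x => a x * z ^ x := .of_norm_bounded ha fun x => hterm x x
  have htail : ∑' x, a x * z ^ x - a 0 = z * ∑' x, a (x + 1) * z ^ x := by
    rw [hsum.tsum_eq_zero_add, ← tsum_mul_left]
    simp only [pow_zero, mul_one, add_sub_cancel_left, pow_succ]
    congr 1 with x
    ring
  rw [htail, norm_mul, mul_comm]
  gcongr
  exact tsum_of_norm_bounded ha'.hasSum fun x => hterm (x + 1) x

theorem tendsto_div_pow_of_isBigO_sub {f : 𝕜 → 𝕜} {c : 𝕜} {n : ℕ}
    (h : (fun z => f z - c * z ^ n) =O[𝓝[≠] 0] fun z => z ^ (n + 1)) :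
    Tendsto (fun z => f z / z ^ n) (𝓝[≠] 0) (𝓝 c) := by
  have hdiv : (fun z => f z / z ^ n - c) =O[𝓝[≠] 0] fun z => z := by
    have := h.mul (isBigO_refl (fun z : 𝕜 => (z ^ n)⁻¹) _)
    refine this.congr' ?_ ?_
    all_goals filter_upwards [self_mem_nhdsWithin] with z (hz : z ≠ 0)
    all_goals field_simp
    ring
  have h0 : Tendsto (fun z : 𝕜 => z) (𝓝[≠] 0) (𝓝 0) :=
    tendsto_nhdsWithin_of_tendsto_nhds tendsto_id
  simpa using (hdiv.trans_tendsto h0).add_const c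

end NormedField

theorem poch_zero (c : ℝ) : poch c 0 = 1 :=
  Finset.prod_range_zero _

theorem poch_succ (c : ℝ) (x : ℕ) : poch c (x + 1) = poch c x * (c + x) :=
  Finset.prod_range_succ _ _

theorem summable_norm_inv_poch_mul_factorial (c : ℝ) :
    Summable fun x : ℕ => ‖(poch c x * x.factorial)⁻¹‖ := by
  refine summable_of_ratio_norm_eventually_le (r := 2⁻¹) (by norm_num) ?_
  filter_upwards [eventually_ge_atTop (⌈|c|⌉₊ + 1)] with x hx
  have hx' : |c| + 1 ≤ x := by
    have hceil : ((⌈|c|⌉₊ + 1 : ℕ) : ℝ) ≤ x := by exact_mod_cast hx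
    push_cast at hceil
    linarith [Nat.le_ceil |c|]
  have hratio : 2 ≤ ‖(c + x) * (x + 1)‖ := by
    rw [Real.norm_eq_abs, abs_mul, abs_of_pos (by positivity : (0 : ℝ) < x + 1)]
    have h1 : 1 ≤ |c + x| := le_abs.mpr (Or.inl (by linarith [neg_abs_le c]))
    calc (2 : ℝ) = 1 * 2 := by norm_num
      _ ≤ |c + x| * (x + 1) :=
        mul_le_mul h1 (by linarith [abs_nonneg c]) (by norm_num) (abs_nonneg _)
  have hrec : (poch c (x + 1) * (x + 1).factorial)⁻¹
      = (poch c x * x.factorial)⁻¹ * ((c + x) * (x + 1))⁻¹ := by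
    rw [poch_succ, Nat.factorial_succ, Nat.cast_mul, Nat.cast_succ, ← mul_inv]
    ring_nf
  rw [norm_norm, norm_norm, hrec, norm_mul, norm_inv ((c + x) * _ : ℝ), mul_comm]
  gcongr

theorem nu_eq_mul_tsum (b : ℝ) (j : ℕ) (z : ℝ) :
    nu b j z = (poch (b + 1) j)⁻¹ * z ^ j *
      ∑' x : ℕ, (poch (b + j + 1) x * x.factorial)⁻¹ * z ^ x := by
  simp only [nu, div_eq_inv_mul]

theorem isBigO_nu_sub (b : ℝ) (j : ℕ) :
    (fun z => nu b j z - z ^ j / poch (b + 1) j) =O[𝓝 0] fun z => z ^ (j + 1) := by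
  have hS := isBigO_tsum_mul_pow_sub_const (summable_norm_inv_poch_mul_factorial (b + j + 1))
  have hpow : (fun z : ℝ => (poch (b + 1) j)⁻¹ * z ^ j) =O[𝓝 0] fun z => z ^ j :=
    (isBigO_refl _ _).const_mul_left _
  refine (hpow.mul hS).congr (fun z => ?_) (fun z => by ring)
  simp only [nu_eq_mul_tsum, poch_zero, Nat.factorial_zero, Nat.cast_one, mul_one, inv_one]
  ring

theorem isBigO_nu (b : ℝ) (j : ℕ) : (nu b j) =O[𝓝 0] fun z => z ^ j := by
  have hmain : (fun z => z ^ j / poch (b + 1) j) =O[𝓝 0] fun z => z ^ j := by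
    simpa only [div_eq_inv_mul] using (isBigO_refl (fun z : ℝ => z ^ j) _).const_mul_left _
  simpa using ((isBigO_nu_sub b j).trans (isBigO_pow_pow_nhds_zero j.le_succ)).add hmain

theorem isBigO_sum_choose_mul_nu_sub (b : ℝ) (n m : ℕ) :
    (fun z : ℝ =>
        (∑ k ∈ Finset.range (m + 1),
          (n.choose k : ℝ) * (m.choose k : ℝ) * (k.factorial : ℝ) * nu b (n + m - k) z) -
          (n.choose m : ℝ) * (m.factorial : ℝ) / poch (b + 1) n * z ^ n)
      =O[𝓝 0] fun z => z ^ (n + 1) := by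
  have hsplit : ∀ z : ℝ,
      (∑ k ∈ Finset.range m,
          (n.choose k : ℝ) * (m.choose k : ℝ) * (k.factorial : ℝ) * nu b (n + m - k) z) +
        (n.choose m : ℝ) * (m.factorial : ℝ) * (nu b n z - z ^ n / poch (b + 1) n) =
      (∑ k ∈ Finset.range (m + 1),
          (n.choose k : ℝ) * (m.choose k : ℝ) * (k.factorial : ℝ) * nu b (n + m - k) z) -
        (n.choose m : ℝ) * (m.factorial : ℝ) / poch (b + 1) n * z ^ n := fun z => by
    rw [Finset.sum_range_succ, Nat.add_sub_cancel, Nat.choose_self, Nat.cast_one]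
    ring
  refine IsBigO.congr_left
    (.add (.fun_sum fun k hk => ?_) ((isBigO_nu_sub b n).const_mul_left _)) hsplit
  have hk : n + 1 ≤ n + m - k := by
    have := Finset.mem_range.mp hk
    omega
  exact ((isBigO_nu b _).trans (isBigO_pow_pow_nhds_zero hk)).const_mul_left _

theorem L_ffact_mul_ffact_asymptotics_general (b : ℝ) (n m : ℕ) :
    (fun z : ℝ =>
        (∑ k ∈ Finset.range (m + 1),
          (n.choose k : ℝ) * (m.choose k : ℝ) * (k.factorial : ℝ) * nu b (n + m - k) z) -
          (n.choose m : ℝ) * (m.factorial : ℝ) / poch (b + 1) n * z ^ n)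
      =O[𝓝[>] (0 : ℝ)] (fun z : ℝ => z ^ (n + 1)) ∧
    Tendsto
      (fun z : ℝ =>
        (∑ k ∈ Finset.range (m + 1),
          (n.choose k : ℝ) * (m.choose k : ℝ) * (k.factorial : ℝ) * nu b (n + m - k) z) / z ^ n)
      (𝓝[>] (0 : ℝ))
      (𝓝 ((n.choose m : ℝ) * (m.factorial : ℝ) / poch (b + 1) n)) := by
  have h := isBigO_sum_choose_mul_nu_sub b n m
  exact ⟨h.mono nhdsWithin_le_nhds,
    (tendsto_div_pow_of_isBigO_sub (h.mono nhdsWithin_le_nhds)).mono_left (nhdsGT_le_nhdsNE 0)⟩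

theorem L_ffact_mul_ffact_asymptotics (b : ℝ) (hb : -1 < b) (n m : ℕ) (hmn : m ≤ n) :
    (fun z : ℝ =>
        (∑ k ∈ Finset.range (m + 1),
          (n.choose k : ℝ) * (m.choose k : ℝ) * (k.factorial : ℝ) * nu b (n + m - k) z) -
          (n.choose m : ℝ) * (m.factorial : ℝ) / poch (b + 1) n * z ^ n)
      =O[𝓝[>] (0 : ℝ)] (fun z : ℝ => z ^ (n + 1)) ∧
    Tendsto
      (fun z : ℝ =>
        (∑ k ∈ Finset.range (m + 1),
          (n.choose k : ℝ) * (m.choose k : ℝ) * (k.factorial : ℝ) * nu b (n + m - k) z) / z ^ n)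
      (𝓝[>] (0 : ℝ))
      (𝓝 ((n.choose m : ℝ) * (m.factorial : ℝ) / poch (b + 1) n)) :=
  L_ffact_mul_ffact_asymptotics_general b n m
end

section
/- Let {P_n} be monic polynomials orthogonal with respect to a functional L with norms h_n, satisfying ΔP_n = n P_{n-1} + ξ_n P_{n-2} where ξ_n h_{n-2} = h_n/z. Let {S_n} be monic polynomials orthogonal with respect to ⟨p,q⟩ = L[pq] + λ L[Δp Δq] with norms h̃_n. Then P_n = S_n + a_n S_{n-1} where a_n = (n−1)λ h_n / (z h̃_{n-1}) for all n ≥ 2. -/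
/-!
Expand `P_n - S_n - a_n S_{n-1}`, a polynomial of degree `< n`, in the basis `(S_k)`: its `k`-th
coefficient is its Sobolev product with `S_k` divided by `h̃_k`. Since `ΔP_n` is a combination of
`P_{n-1}` and `P_{n-2}`, `P_n` is Sobolev-orthogonal to all polynomials of degree `≤ n - 2`; against
`S_{n-1}` only the leading part `(n-1) P_{n-2}` of `ΔS_{n-1}` contributes, which gives
`λ (n-1) ξ_n h_{n-2} = λ (n-1) h_n / z = a_n h̃_{n-1}`. So every coefficient vanishes.
-/

open Polynomial

/-- The forward difference operator on polynomials: `Δp = p(x+1) - p(x)`. -/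
noncomputable def fdiff (p : Polynomial ℝ) : Polynomial ℝ := p.comp (X + 1) - p

open Finset

theorem Polynomial.IsMonicOfDegree.coeff_self {R : Type*} [Semiring R] {p : R[X]} {n : ℕ}
    (hp : IsMonicOfDegree p n) : p.coeff n = 1 :=
  hp.natDegree_eq ▸ hp.monic.coeff_natDegree

theorem Polynomial.IsMonicOfDegree.degree_sub_lt {R : Type*} [Ring R] {p q : R[X]} {n : ℕ}
    (hp : IsMonicOfDegree p n) (hq : IsMonicOfDegree q n) : (p - q).degree < n :=
  (degree_lt_iff_coeff_zero _ _).2 fun _ hm => by rw [coeff_sub, hp.coeff_eq hq hm, sub_self]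

theorem Polynomial.IsMonicOfDegree.degree_lt {R : Type*} [Semiring R] {p : R[X]} {n m : ℕ}
    (hp : IsMonicOfDegree p n) (h : n < m) : p.degree < m :=
  degree_le_natDegree.trans_lt (by rw [hp.natDegree_eq]; exact_mod_cast h)

theorem Polynomial.IsMonicOfDegree.degree_sub_sub_C_mul_lt {R : Type*} [CommRing R]
    {p q r : R[X]} {m : ℕ} (hp : IsMonicOfDegree p (m + 1)) (hq : IsMonicOfDegree q (m + 1))
    (hr : IsMonicOfDegree r m) (a : R) : (p - q - C a * r).degree < ↑(m + 1) := by
  refine (degree_sub_le _ _).trans_lt (max_lt (hp.degree_sub_lt hq) ?_)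
  rw [← smul_eq_C_mul]
  exact (degree_smul_le a r).trans_lt (hr.degree_lt m.lt_succ_self)

section Expansion

variable {R : Type*} [CommRing R] {Q : ℕ → R[X]}

theorem exists_eq_sum_C_mul_of_degree_lt (hQ : ∀ n, IsMonicOfDegree (Q n) n) :
    ∀ {m : ℕ} {p : R[X]}, p.degree < m → ∃ c : ℕ → R, p = ∑ k ∈ range m, C (c k) * Q k := by
  intro m
  induction m with
  | zero =>
    intro p hp
    exact ⟨0, by simpa using hp⟩
  | succ m ih =>
    intro p hp
    have hlower : (p - C (p.coeff m) * Q m).degree < m := by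
      rw [degree_lt_iff_coeff_zero] at hp ⊢
      intro j hj
      rw [coeff_sub, coeff_C_mul]
      rcases hj.eq_or_lt with rfl | hj
      · rw [(hQ m).coeff_self, mul_one, sub_self]
      · have hQj : (Q m).coeff j = 0 :=
          coeff_eq_zero_of_natDegree_lt ((hQ m).natDegree_eq.trans_lt hj)
        rw [hp j hj, hQj, mul_zero, sub_zero]
    obtain ⟨c, hc⟩ := ih hlower
    refine ⟨Function.update c m (p.coeff m), ?_⟩
    rw [sum_range_succ, Function.update_self,
      sum_congr rfl fun k hk => by rw [Function.update_of_ne (mem_range.mp hk).ne], ← hc]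
    ring

theorem map_eq_zero_of_degree_lt {M : Type*} [AddCommGroup M] [Module R M]
    (hQ : ∀ n, IsMonicOfDegree (Q n) n) (f : R[X] →ₗ[R] M) {m : ℕ}
    (hf : ∀ k < m, f (Q k) = 0) {p : R[X]} (hp : p.degree < m) : f p = 0 := by
  obtain ⟨c, rfl⟩ := exists_eq_sum_C_mul_of_degree_lt hQ hp
  simp only [map_sum, ← smul_eq_C_mul, map_smul]
  exact sum_eq_zero fun k hk => by rw [hf k (mem_range.mp hk), smul_zero]

theorem map_mul_eq_zero_of_degree_lt (hQ : ∀ n, IsMonicOfDegree (Q n) n)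
    (L : R[X] →ₗ[R] R) (hQortho : ∀ k n, k ≠ n → L (Q k * Q n) = 0) {n : ℕ} {q : R[X]}
    (hq : q.degree < n) : L (Q n * q) = 0 :=
  map_eq_zero_of_degree_lt hQ (L ∘ₗ LinearMap.mulLeft R (Q n))
    (fun k hk => hQortho n k (by omega)) hq

end Expansion

theorem eq_zero_of_degree_lt_of_orthogonal {K : Type*} [Field K] {S : ℕ → K[X]}
    (hS : ∀ n, IsMonicOfDegree (S n) n) (B : K[X] →ₗ[K] K[X] →ₗ[K] K) (t : ℕ → K)
    (ht : ∀ n, t n ≠ 0) (hSortho : ∀ k n, B (S k) (S n) = if k = n then t n else 0) {m : ℕ}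
    {p : K[X]} (hp : p.degree < m) (hpS : ∀ k < m, B p (S k) = 0) : p = 0 := by
  obtain ⟨c, rfl⟩ := exists_eq_sum_C_mul_of_degree_lt hS hp
  have hc : ∀ j < m, c j = 0 := fun j hj => by
    have hBj : B (∑ k ∈ range m, C (c k) * S k) (S j) = c j * t j := by
      simp only [map_sum, ← smul_eq_C_mul, map_smul, LinearMap.sum_apply, LinearMap.smul_apply,
        hSortho, smul_eq_mul, mul_ite, mul_zero]
      rw [sum_ite_eq' (range m) j, if_pos (mem_range.mpr hj)]
    exact (mul_eq_zero.mp (hBj ▸ hpS j hj)).resolve_right (ht j)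
  exact sum_eq_zero fun k hk => by rw [hc k (mem_range.mp hk), C_0, zero_mul]

noncomputable def fdiffₗ : ℝ[X] →ₗ[ℝ] ℝ[X] := taylor 1 - LinearMap.id

theorem fdiffₗ_apply (p : ℝ[X]) : fdiffₗ p = fdiff p := by
  simp [fdiffₗ, fdiff, taylor_apply]

theorem coeff_fdiff_of_natDegree_le (p : ℝ[X]) {j : ℕ} (hj : p.natDegree ≤ j) :
    (fdiff p).coeff j = 0 := by
  rw [← fdiffₗ_apply, fdiffₗ, LinearMap.sub_apply, LinearMap.id_apply, coeff_sub]
  rcases hj.eq_or_lt with rfl | hj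
  · rw [coeff_taylor_natDegree, leadingCoeff, sub_self]
  · rw [coeff_eq_zero_of_natDegree_lt ((natDegree_taylor p 1).trans_lt hj),
      coeff_eq_zero_of_natDegree_lt hj, sub_self]

theorem degree_fdiff_lt (p : ℝ[X]) : (fdiff p).degree < p.natDegree :=
  (degree_lt_iff_coeff_zero _ _).2 fun _ => coeff_fdiff_of_natDegree_le p

theorem coeff_fdiff_of_natDegree_eq_add_one (p : ℝ[X]) {m : ℕ} (hp : p.natDegree = m + 1) :
    (fdiff p).coeff m = (m + 1) * p.leadingCoeff := by
  have hdeg : (hasseDeriv m p).natDegree < 2 := by rw [natDegree_hasseDeriv, hp]; omega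
  rw [← fdiffₗ_apply, fdiffₗ, LinearMap.sub_apply, LinearMap.id_apply, coeff_sub, taylor_coeff,
    eval_eq_sum_range' hdeg, sum_range_succ, sum_range_one, hasseDeriv_coeff, hasseDeriv_coeff,
    leadingCoeff, hp]
  rw [zero_add, add_comm 1 m, Nat.choose_self, Nat.choose_succ_self_right]
  push_cast
  ring

theorem degree_fdiff_sub_C_mul_lt {S Q : ℝ[X]} {m : ℕ} (hS : IsMonicOfDegree S (m + 1))
    (hQ : IsMonicOfDegree Q m) : (fdiff S - C ((m : ℝ) + 1) * Q).degree < m :=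
  (degree_lt_iff_coeff_zero _ _).2 fun j hj => by
    rw [coeff_sub, coeff_C_mul]
    rcases hj.eq_or_lt with rfl | hj
    · rw [coeff_fdiff_of_natDegree_eq_add_one S hS.natDegree_eq, hS.leadingCoeff_eq, hQ.coeff_self,
        sub_self]
    · rw [coeff_fdiff_of_natDegree_le S (by rw [hS.natDegree_eq]; omega),
        coeff_eq_zero_of_natDegree_lt (hQ.natDegree_eq.trans_lt hj), mul_zero, sub_zero]

noncomputable def sobolevForm (L : ℝ[X] →ₗ[ℝ] ℝ) (lam : ℝ) : ℝ[X] →ₗ[ℝ] ℝ[X] →ₗ[ℝ] ℝ :=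
  (LinearMap.mul ℝ ℝ[X]).compr₂ L + lam • ((LinearMap.mul ℝ ℝ[X]).compr₂ L).compl₁₂ fdiffₗ fdiffₗ

theorem sobolevForm_apply (L : ℝ[X] →ₗ[ℝ] ℝ) (lam : ℝ) (p q : ℝ[X]) :
    sobolevForm L lam p q = L (p * q) + lam * L (fdiff p * fdiff q) := by
  simp [sobolevForm, fdiffₗ_apply]

section StructureRelation

variable {L : ℝ[X] →ₗ[ℝ] ℝ} {P : ℕ → ℝ[X]} {n : ℕ} {c ξ : ℝ}

theorem sobolevForm_eq_zero_of_natDegree_le (hP : ∀ n, IsMonicOfDegree (P n) n)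
    (hPortho : ∀ k n, k ≠ n → L (P k * P n) = 0)
    (hΔ : fdiff (P (n + 2)) = C c * P (n + 1) + C ξ * P n) (lam : ℝ) {q : ℝ[X]}
    (hq : q.natDegree ≤ n) : sobolevForm L lam (P (n + 2)) q = 0 := by
  have horth : ∀ {m : ℕ} {p : ℝ[X]}, p.degree < m → L (P m * p) = 0 :=
    map_mul_eq_zero_of_degree_lt hP L hPortho
  have hqdeg : q.degree < ↑(n + 2) :=
    degree_le_natDegree.trans_lt (by exact_mod_cast hq.trans_lt (by omega))
  have hΔq : (fdiff q).degree < n := (degree_fdiff_lt q).trans_le (by exact_mod_cast hq)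
  rw [sobolevForm_apply, hΔ, add_mul, ← smul_eq_C_mul, ← smul_eq_C_mul, smul_mul_assoc,
    smul_mul_assoc, map_add, map_smul, map_smul, horth hqdeg, horth hΔq,
    horth (hΔq.trans (by exact_mod_cast n.lt_succ_self))]
  simp

theorem sobolevForm_eq_of_isMonicOfDegree_add_one (hP : ∀ n, IsMonicOfDegree (P n) n)
    (hPortho : ∀ k n, k ≠ n → L (P k * P n) = 0)
    (hΔ : fdiff (P (n + 2)) = C c * P (n + 1) + C ξ * P n) (lam : ℝ) {S : ℝ[X]}
    (hS : IsMonicOfDegree S (n + 1)) :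
    sobolevForm L lam (P (n + 2)) S = lam * ((n + 1) * ξ * L (P n * P n)) := by
  have horth : ∀ {m : ℕ} {p : ℝ[X]}, p.degree < m → L (P m * p) = 0 :=
    map_mul_eq_zero_of_degree_lt hP L hPortho
  -- `ΔS = (n+1) P_n + R` with `deg R < n`, so only `ξ P_n · (n+1) P_n` survives under `L`.
  set R := fdiff S - C ((n : ℝ) + 1) * P n with hR
  have hRdeg : R.degree < n := degree_fdiff_sub_C_mul_lt hS (hP n)
  have hexp : fdiff (P (n + 2)) * fdiff S = (c * (n + 1)) • (P (n + 1) * P n)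
      + c • (P (n + 1) * R) + (ξ * (n + 1)) • (P n * P n) + ξ • (P n * R) := by
    rw [hΔ, show fdiff S = C ((n : ℝ) + 1) * P n + R by rw [hR]; ring]
    simp only [smul_eq_C_mul, C_mul]
    ring
  rw [sobolevForm_apply, horth (hS.degree_lt (by omega)), hexp]
  simp only [map_add, map_smul, smul_eq_mul, hPortho (n + 1) n (by omega), horth hRdeg,
    horth (hRdeg.trans (by exact_mod_cast n.lt_succ_self))]
  ring

end StructureRelation

theorem connection_formula_general (L : Polynomial ℝ →ₗ[ℝ] ℝ) (z lam : ℝ)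
    (P S : ℕ → Polynomial ℝ)
    (hPmonic : ∀ n, (P n).Monic) (hPdeg : ∀ n, (P n).natDegree = n)
    (hSmonic : ∀ n, (S n).Monic) (hSdeg : ∀ n, (S n).natDegree = n)
    (h htil : ℕ → ℝ) (htilne : ∀ n, htil n ≠ 0)
    (hPortho : ∀ k n, L (P k * P n) = if k = n then h n else 0)
    (ip : Polynomial ℝ → Polynomial ℝ → ℝ)
    (hip : ∀ p q, ip p q = L (p * q) + lam * L (fdiff p * fdiff q))
    (hSortho : ∀ k n, ip (S k) (S n) = if k = n then htil n else 0)
    (ξ : ℕ → ℝ)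
    (hstruct : ∀ n, 2 ≤ n →
      fdiff (P n) = C (n : ℝ) * P (n - 1) + C (ξ n) * P (n - 2))
    (hxi : ∀ n, 2 ≤ n → ξ n * h (n - 2) = h n / z) :
    ∀ n, 2 ≤ n →
      P n = S n + C (((n : ℝ) - 1) * lam * h n / (z * htil (n - 1))) * S (n - 1) := by
  have hP : ∀ n, IsMonicOfDegree (P n) n := fun n => ⟨hPdeg n, hPmonic n⟩
  have hS : ∀ n, IsMonicOfDegree (S n) n := fun n => ⟨hSdeg n, hSmonic n⟩
  have hPortho' : ∀ k n, k ≠ n → L (P k * P n) = 0 := fun k n hkn => by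
    rw [hPortho, if_neg hkn]
  obtain rfl : ip = fun p q => sobolevForm L lam p q :=
    funext₂ fun p q => (hip p q).trans (sobolevForm_apply L lam p q).symm
  intro n hn
  obtain ⟨n, rfl⟩ := Nat.exists_eq_add_of_le' hn
  have hΔ : fdiff (P (n + 2)) = C ((n : ℝ) + 2) * P (n + 1) + C (ξ (n + 2)) * P n := by
    simpa using hstruct (n + 2) hn
  simp only [Nat.cast_add, Nat.cast_ofNat, show n + 2 - 1 = n + 1 from rfl,
    show (n : ℝ) + 2 - 1 = n + 1 by ring]
  set a := ((n : ℝ) + 1) * lam * h (n + 2) / (z * htil (n + 1))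
  suffices P (n + 2) - S (n + 2) - C a * S (n + 1) = 0 by linear_combination this
  refine eq_zero_of_degree_lt_of_orthogonal hS (sobolevForm L lam) htil htilne hSortho
    ((hP _).degree_sub_sub_C_mul_lt (hS _) (hS _) a) fun k hk => ?_
  simp only [map_sub, ← smul_eq_C_mul, map_smul, LinearMap.sub_apply, LinearMap.smul_apply,
    smul_eq_mul, hSortho]
  rcases (Nat.lt_succ_iff.mp hk).eq_or_lt with rfl | hk
  · have hξ : ξ (n + 2) * h n = h (n + 2) / z := hxi (n + 2) hn
    have ha : a * htil (n + 1) = (n + 1) * lam * h (n + 2) / z := by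
      rw [div_mul_eq_mul_div, mul_div_mul_right _ _ (htilne _)]
    rw [sobolevForm_eq_of_isMonicOfDegree_add_one hP hPortho' hΔ lam (hS (n + 1)), hPortho, if_pos rfl,
      if_neg (by omega), if_pos rfl]
    linear_combination lam * (n + 1) * hξ - ha
  · rw [sobolevForm_eq_zero_of_natDegree_le hP hPortho' hΔ lam
      ((hS k).natDegree_eq.trans_le (by omega)), if_neg (by omega), if_neg (by omega)]
    ring

theorem connection_formula (L : Polynomial ℝ →ₗ[ℝ] ℝ) (z lam : ℝ)
    (hz : 0 < z) (hlam : 0 < lam)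
    (P S : ℕ → Polynomial ℝ)
    (hPmonic : ∀ n, (P n).Monic) (hPdeg : ∀ n, (P n).natDegree = n)
    (hSmonic : ∀ n, (S n).Monic) (hSdeg : ∀ n, (S n).natDegree = n)
    (h htil : ℕ → ℝ) (hne : ∀ n, h n ≠ 0) (htilne : ∀ n, htil n ≠ 0)
    (hPortho : ∀ k n, L (P k * P n) = if k = n then h n else 0)
    (ip : Polynomial ℝ → Polynomial ℝ → ℝ)
    (hip : ∀ p q, ip p q = L (p * q) + lam * L (fdiff p * fdiff q))
    (hSortho : ∀ k n, ip (S k) (S n) = if k = n then htil n else 0)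
    (ξ : ℕ → ℝ)
    (hstruct : ∀ n, 2 ≤ n →
      fdiff (P n) = C (n : ℝ) * P (n - 1) + C (ξ n) * P (n - 2))
    (hxi : ∀ n, 2 ≤ n → ξ n * h (n - 2) = h n / z) :
    ∀ n, 2 ≤ n →
      P n = S n + C (((n : ℝ) - 1) * lam * h n / (z * htil (n - 1))) * S (n - 1) :=
  connection_formula_general L z lam P S hPmonic hPdeg hSmonic hSdeg h htil htilne hPortho ip hip
    hSortho ξ hstruct hxi
end
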